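/- arXiv:1903.09228 — 2 statements merged into one kernel-verified Lean document; each statement's English description precedes it below -/
import Mathlib

section
/- For every integer k ≥ 1, the divergent series 1^k - 2^k + 3^k - 4^k + ⋯ is Abel summable with Abel sum equal to ((2^{k+1} - 1)/(k+1)) · B_{k+1}; that is, for 0 ≤ x < 1 the series Σ_{n≥0} (-1)^n (n+1)^k x^n converges, and its limit as x → 1⁻ equals ((2^{k+1} - 1)/(k+1)) · B_{k+1}. -/
/-!
For `‖r‖ < 1` put `S_k(r) = ∑ (n+1)^k r^n`. Expanding `(n+2)^k` by the binomial theorem gives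
`S_k(r) = 1 + r ∑_{i ≤ k} C(k,i) S_i(r)`, so at `r = -x` with `x → 1⁻` the limit of `S_k(-x)` is
determined by strong induction on `k` from the recursion `∑_{i ≤ k} C(k,i) μ_i + μ_k = 1`.
In exponential generating functions this recursion reads `M(t) (1 + e^t) = e^t`, and the identity
`t e^t / (e^t + 1) = B'(2t) - B'(t)` for `B'(t) = t e^t / (e^t - 1)` shows that
`μ_k = (2^{k+1} - 1) B'_{k+1} / (k+1)` solves it.
-/

open Filter Topology Finset PowerSeries
open scoped Nat

theorem coeff_mk_div_factorial_mul_exp (f : ℕ → ℚ) (n : ℕ) :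
    coeff n (PowerSeries.mk (fun i => f i / i !) * exp ℚ) =
      (∑ i ∈ range (n + 1), (n.choose i : ℚ) * f i) / n ! := by
  rw [coeff_mul, Nat.sum_antidiagonal_eq_sum_range_succ_mk, sum_div]
  refine sum_congr rfl fun i hi => ?_
  rw [coeff_mk, coeff_exp, Nat.cast_choose ℚ (Nat.le_of_lt_succ (mem_range.1 hi))]
  simp only [Algebra.algebraMap_self, RingHom.id_apply]
  field_simp

theorem rescale_two_bernoulli'PowerSeries_mul_exp_add_one :
    rescale 2 (bernoulli'PowerSeries ℚ) * (exp ℚ + 1) = 2 * bernoulli'PowerSeries ℚ * exp ℚ := by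
  have hB := bernoulli'PowerSeries_mul_exp_sub_one ℚ
  have hsq : rescale 2 (exp ℚ) = exp ℚ ^ 2 := by
    rw [exp_pow_eq_rescale_exp]
    norm_num
  have hB₂ := congr_arg (rescale (2 : ℚ)) hB
  rw [map_mul, map_sub, map_one, map_mul, rescale_X, hsq, map_ofNat] at hB₂
  have hne : exp ℚ - 1 ≠ 0 := fun h => by simpa using congr_arg (coeff 1) h
  apply mul_right_cancel₀ hne
  linear_combination hB₂ - 2 * exp ℚ * hB

/-- The value `η(-n)` of the Dirichlet eta function. Since `bernoulli' 1 = 1/2`, the formula is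
also right at `n = 0`, where `η(0) = 1/2`. -/
def etaNeg (n : ℕ) : ℚ := (2 ^ (n + 1) - 1) / (n + 1) * bernoulli' (n + 1)

theorem X_mul_mk_etaNeg :
    X * PowerSeries.mk (fun n => etaNeg n / n !) =
      rescale 2 (bernoulli'PowerSeries ℚ) - bernoulli'PowerSeries ℚ := by
  ext (_ | n)
  · rw [coeff_zero_X_mul, map_sub, coeff_rescale]
    simp [bernoulli'PowerSeries]
  · rw [coeff_succ_X_mul]
    simp only [etaNeg, coeff_mk, bernoulli'PowerSeries, Algebra.algebraMap_self, map_div₀,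
      eq_ratCast, Rat.cast_eq_id, id_eq, map_natCast, map_sub, coeff_rescale, Nat.factorial_succ,
      Nat.cast_mul, Nat.cast_add, Nat.cast_one]
    field_simp

theorem mk_etaNeg_mul_one_add_exp :
    PowerSeries.mk (fun n => etaNeg n / n !) * (1 + exp ℚ) = exp ℚ := by
  apply X_mul_cancel
  rw [← mul_assoc, X_mul_mk_etaNeg]
  linear_combination rescale_two_bernoulli'PowerSeries_mul_exp_add_one +
    bernoulli'PowerSeries_mul_exp_sub_one ℚ

theorem sum_choose_mul_etaNeg_add_etaNeg (n : ℕ) :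
    ∑ i ∈ range (n + 1), (n.choose i : ℚ) * etaNeg i + etaNeg n = 1 := by
  have h := congr_arg (coeff n) mk_etaNeg_mul_one_add_exp
  rw [mul_add, mul_one, map_add, coeff_mk_div_factorial_mul_exp, coeff_mk, coeff_exp,
    Algebra.algebraMap_self, RingHom.id_apply] at h
  have : (n ! : ℚ) ≠ 0 := by positivity
  field_simp at h
  linarith

section Geometric

variable {R : Type*} [NormedCommRing R] [HasSummableGeomSeries R] {r : R}

theorem summable_add_one_pow_mul_geometric (k : ℕ) (hr : ‖r‖ < 1) :
    Summable fun n : ℕ => ((n : R) + 1) ^ k * r ^ n := by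
  simp_rw [add_pow, one_pow, mul_one, sum_mul]
  exact summable_sum fun j _ =>
    ((summable_pow_mul_geometric_of_norm_lt_one j hr).mul_right (k.choose j : R)).congr
      fun n => by ring

theorem tsum_add_one_pow_mul_geometric (k : ℕ) (hr : ‖r‖ < 1) :
    ∑' n : ℕ, ((n : R) + 1) ^ k * r ^ n =
      1 + r * ∑ i ∈ range (k + 1), (k.choose i : R) * ∑' n : ℕ, ((n : R) + 1) ^ i * r ^ n := by
  have hshift : HasSum (fun n : ℕ => r * ∑ i ∈ range (k + 1),
      (k.choose i : R) * (((n : R) + 1) ^ i * r ^ n))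
      (r * ∑ i ∈ range (k + 1), (k.choose i : R) * ∑' n : ℕ, ((n : R) + 1) ^ i * r ^ n) :=
    (hasSum_sum fun i _ =>
      ((summable_add_one_pow_mul_geometric i hr).hasSum.mul_left _)).mul_left r
  rw [(summable_add_one_pow_mul_geometric k hr).tsum_eq_zero_add, ← hshift.tsum_eq]
  simp only [Nat.cast_zero, zero_add, one_pow, pow_zero, mul_one, Nat.cast_succ]
  congr 1
  refine tsum_congr fun n => ?_
  rw [add_pow, mul_sum, sum_mul]
  refine sum_congr rfl fun i _ => ?_
  ring

end Geometric

theorem tendsto_tsum_add_one_pow_mul_neg_geometric (k : ℕ) :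
    Tendsto (fun x : ℝ => ∑' n : ℕ, ((n : ℝ) + 1) ^ k * (-x) ^ n) (𝓝[<] 1)
      (𝓝 (etaNeg k : ℝ)) := by
  induction k using Nat.strong_induction_on with
  | _ k ih =>
    set S : ℕ → ℝ → ℝ := fun i x => ∑' n : ℕ, ((n : ℝ) + 1) ^ i * (-x) ^ n
    have hx : Tendsto (fun x : ℝ => x) (𝓝[<] 1) (𝓝 1) := nhdsWithin_le_nhds
    have hsum : Tendsto (fun x => ∑ i ∈ range k, (k.choose i : ℝ) * S i x) (𝓝[<] 1)
        (𝓝 (∑ i ∈ range k, (k.choose i : ℝ) * etaNeg i)) :=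
      tendsto_finsetSum _ fun i hi => (ih i (mem_range.1 hi)).const_mul _
    have hlim : (1 - 1 * ∑ i ∈ range k, (k.choose i : ℝ) * etaNeg i) / (1 + 1) = etaNeg k := by
      have h := congr_arg (Rat.cast : ℚ → ℝ) (sum_choose_mul_etaNeg_add_etaNeg k)
      rw [sum_range_succ, Nat.choose_self] at h
      push_cast at h
      linarith
    rw [← hlim]
    refine ((tendsto_const_nhds.sub (hx.mul hsum)).div (tendsto_const_nhds.add hx)
      (by norm_num)).congr' ?_
    filter_upwards [Ioo_mem_nhdsLT (show (-1 : ℝ) < 1 by norm_num)] with x ⟨hx₁, hx₂⟩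
    have hr : ‖-x‖ < 1 := by rw [norm_neg, Real.norm_eq_abs, abs_lt]; exact ⟨hx₁, hx₂⟩
    have hrec := tsum_add_one_pow_mul_geometric k hr
    rw [sum_range_succ, Nat.choose_self, Nat.cast_one, one_mul] at hrec
    change (1 - x * ∑ i ∈ range k, (k.choose i : ℝ) * S i x) / (1 + x) = S k x
    rw [div_eq_iff (by linarith)]
    linear_combination -hrec

theorem abel_sum_alternating_powers (k : ℕ) (hk : 1 ≤ k) :
    (∀ x : ℝ, 0 ≤ x → x < 1 →
      Summable (fun n : ℕ => (-1 : ℝ) ^ n * ((n : ℝ) + 1) ^ k * x ^ n)) ∧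
    Tendsto (fun x : ℝ => ∑' n : ℕ, (-1 : ℝ) ^ n * ((n : ℝ) + 1) ^ k * x ^ n)
      (𝓝[Set.Ico (0 : ℝ) 1] 1)
      (𝓝 (((2 ^ (k + 1) - 1 : ℝ) / (k + 1)) * (bernoulli (k + 1) : ℝ))) := by
  have hterm (x : ℝ) (n : ℕ) : (-1 : ℝ) ^ n * ((n : ℝ) + 1) ^ k * x ^ n =
      ((n : ℝ) + 1) ^ k * (-x) ^ n := by
    rw [neg_pow]
    ring
  have hvalue : (etaNeg k : ℝ) = ((2 ^ (k + 1) - 1 : ℝ) / (k + 1)) * (bernoulli (k + 1) : ℝ) := by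
    rw [etaNeg, bernoulli_eq_bernoulli'_of_ne_one (by omega)]
    push_cast
    ring
  simp_rw [hterm, ← hvalue]
  refine ⟨fun x h0 h1 => summable_add_one_pow_mul_geometric k ?_, ?_⟩
  · rwa [norm_neg, Real.norm_eq_abs, abs_of_nonneg h0]
  · exact (tendsto_tsum_add_one_pow_mul_neg_geometric k).mono_left
      (nhdsWithin_mono _ Set.Ico_subset_Iio_self)
end

section
/- For every integer k ≥ 1, real numbers a > 0 and q, the identity q^k/2 - Σ_{j=1}^{k} (k choose j) q^{k-j} a^j ((2^{j+1}-1)/(j+1)) B_{j+1} = ((-1)^k / 2) · Σ_{j=0}^{k} (k choose j) (a/2 - q)^{k-j} (a/2)^j (-1)^{⌊j/2⌋} E_j holds. -/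
/-!
With `g n = -2 (2^(n+1) - 1) B_(n+1) / (n+1)`, the generating function of the Bernoulli numbers
gives `∑ g n tⁿ/n! = 2/(eᵗ + 1)`, so the left side is `k!` times the `t^k`-coefficient of
`e^(qt)/(e^(at) + 1)`. The Leibniz rule applied to `sec · cos = 1` shows that `∑ E n tⁿ/n!` is the
formal inverse of the cosine series; since both series are even, the sign twist by `(-1)^⌊n/2⌋`
is multiplicative on them and turns this into `∑ (-1)^⌊n/2⌋ E n tⁿ/n! = 2/(eᵗ + e⁻ᵗ)
= e⁻ᵗ · 2/(e^(-2t) + 1)`. After `t ↦ -t` the right side becomes the same coefficient.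
-/

/-- Euler numbers: `E n` is the `n`-th Taylor coefficient (times `n!`) of `1/cos` at `0`. -/
noncomputable def eulerNumber (n : ℕ) : ℝ :=
  iteratedDeriv n (fun x : ℝ => (Real.cos x)⁻¹) 0

open PowerSeries Finset Nat
open scoped ContDiff Topology

section EGF

variable {K : Type*} [Field K]

noncomputable def egf (c : ℕ → K) : K⟦X⟧ := mk fun n => c n / n !

@[simp]
theorem coeff_egf (c : ℕ → K) (n : ℕ) : coeff n (egf c) = c n / n ! := coeff_mk _ _

theorem rescale_egf (r : K) (c : ℕ → K) : rescale r (egf c) = egf fun n => r ^ n * c n := by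
  ext n
  simp [mul_div_assoc]

variable [CharZero K]

theorem egf_injective : Function.Injective (egf : (ℕ → K) → K⟦X⟧) := by
  intro c d h
  funext n
  have := congrArg (coeff n) h
  simp only [coeff_egf] at this
  exact (div_left_inj' (by exact_mod_cast n.factorial_ne_zero)).mp this

theorem egf_mul (c d : ℕ → K) :
    egf c * egf d = egf fun n => ∑ j ∈ range (n + 1), n.choose j * c j * d (n - j) := by
  ext n
  simp only [coeff_mul, coeff_egf, Nat.sum_antidiagonal_eq_sum_range_succ_mk, sum_div]
  refine sum_congr rfl fun j hj => ?_
  have : (n ! : K) ≠ 0 := by exact_mod_cast n.factorial_ne_zero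
  rw [Nat.cast_choose K (by simpa [Nat.lt_succ_iff] using hj)]
  field_simp

theorem rescale_exp_eq_egf (r : K) : rescale r (exp K) = egf (r ^ ·) := by
  ext n
  simp [div_eq_mul_inv]

end EGF

section Taylor

variable {𝕜 : Type*} [NontriviallyNormedField 𝕜]

noncomputable def taylorSeries (f : 𝕜 → 𝕜) : 𝕜⟦X⟧ := egf fun n => iteratedDeriv n f 0

theorem taylorSeries_congr {f g : 𝕜 → 𝕜} (h : f =ᶠ[𝓝 0] g) : taylorSeries f = taylorSeries g := by
  simp only [taylorSeries, h.iteratedDeriv_eq]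

theorem taylorSeries_const (c : 𝕜) : taylorSeries (fun _ => c) = C c := by
  ext (_ | n) <;> simp [taylorSeries, iteratedDeriv_const, coeff_C]

variable [CharZero 𝕜]

theorem taylorSeries_mul {f g : 𝕜 → 𝕜} (hf : ContDiffAt 𝕜 ∞ f 0) (hg : ContDiffAt 𝕜 ∞ g 0) :
    taylorSeries (f * g) = taylorSeries f * taylorSeries g := by
  rw [taylorSeries, taylorSeries, taylorSeries, egf_mul]
  congr 1
  funext n
  exact iteratedDeriv_mul (hf.of_le (by exact_mod_cast le_top))
    (hg.of_le (by exact_mod_cast le_top))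

theorem coeff_taylorSeries_of_odd {f : 𝕜 → 𝕜} (hf : Function.Even f) {n : ℕ} (hn : Odd n) :
    coeff n (taylorSeries f) = 0 := by
  have h := iteratedDeriv_comp_neg n f 0
  rw [show (fun x => f (-x)) = f from funext hf, neg_zero, hn.neg_one_pow, neg_one_smul] at h
  simp [taylorSeries, self_eq_neg.mp h]

end Taylor

theorem taylorSeries_cos : taylorSeries Real.cos = PowerSeries.cos ℝ := by
  ext n
  obtain ⟨m, rfl | rfl⟩ := n.even_or_odd'
  · simp [taylorSeries, PowerSeries.cos, div_eq_mul_inv]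
  · simp [taylorSeries, PowerSeries.cos]

theorem taylorSeries_sec_mul_cos :
    taylorSeries (fun x => (Real.cos x)⁻¹) * PowerSeries.cos ℝ = 1 := by
  have hcos : ContDiffAt ℝ ∞ Real.cos 0 := Real.contDiff_cos.contDiffAt
  have hsec : ContDiffAt ℝ ∞ (fun x => (Real.cos x)⁻¹) 0 := hcos.inv (by simp)
  rw [← taylorSeries_cos, ← taylorSeries_mul hsec hcos, ← map_one C, ← taylorSeries_const]
  refine taylorSeries_congr ?_
  filter_upwards [Real.continuous_cos.continuousAt.eventually_ne (by simp : Real.cos 0 ≠ 0)]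
    with x hx
  exact inv_mul_cancel₀ hx

section SignTwist

variable {R : Type*} [CommRing R]

/-- On an even series `φ(X²)` this is `φ(-X²)`. -/
noncomputable def signTwist (f : R⟦X⟧) : R⟦X⟧ := mk fun n => (-1) ^ (n / 2) * coeff n f

theorem signTwist_mul {f g : R⟦X⟧} (hf : ∀ n, Odd n → coeff n f = 0)
    (hg : ∀ n, Odd n → coeff n g = 0) : signTwist (f * g) = signTwist f * signTwist g := by
  ext n
  simp only [signTwist, coeff_mk, coeff_mul, mul_sum]
  refine sum_congr rfl fun ⟨i, j⟩ hij => ?_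
  rw [HasAntidiagonal.mem_antidiagonal] at hij
  dsimp only
  rcases Nat.even_or_odd i with ⟨i', rfl⟩ | hi
  · rcases Nat.even_or_odd j with ⟨j', rfl⟩ | hj
    · rw [← hij, show (i' + i' + (j' + j')) / 2 = i' + j' by omega,
        show (i' + i') / 2 = i' by omega, show (j' + j') / 2 = j' by omega, pow_add]
      ring
    · simp [hg j hj]
  · simp [hf i hi]

@[simp]
theorem signTwist_one : signTwist (1 : R⟦X⟧) = 1 := by
  ext (_ | n) <;> simp [signTwist, coeff_one]

theorem two_mul_signTwist_cos [Algebra ℚ R] :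
    2 * signTwist (cos R) = exp R + rescale (-1) (exp R) := by
  ext n
  rw [← map_ofNat C 2, coeff_C_mul]
  rcases Nat.even_or_odd n with hn | hn
  · simp only [signTwist, PowerSeries.cos, coeff_mk, mul_ite, mul_zero, hn, ↓reduceIte,
      ← mul_assoc, map_add, coeff_exp, one_div, coeff_rescale, hn.neg_one_pow, one_mul]
    have hsq : ((-1 : R) ^ (n / 2)) * (-1) ^ (n / 2) = 1 := by
      rw [← mul_pow, neg_one_mul, neg_neg, one_pow]
    rw [div_eq_mul_inv, map_mul, map_pow, map_neg, map_one]
    linear_combination (2 * algebraMap ℚ R (n !)⁻¹) * hsq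
  · simp [signTwist, PowerSeries.cos, coeff_exp, hn.neg_one_pow, Nat.not_even_iff_odd.mpr hn]

end SignTwist

section EulerPolynomialAtZero

variable {K : Type*} [Field K] [CharZero K]

/-- `E_n(0)`, the value at `0` of the `n`-th Euler polynomial; its EGF is `2 / (e^t + 1)`. -/
noncomputable def eulerPolyAtZero (n : ℕ) : K :=
  -2 * (2 ^ (n + 1) - 1) * bernoulli (n + 1) / (n + 1)

theorem X_mul_egf_eulerPolyAtZero :
    X * egf (eulerPolyAtZero (K := K)) =
      2 * (bernoulliPowerSeries K - rescale 2 (bernoulliPowerSeries K)) := by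
  ext n
  rw [← map_ofNat C 2, coeff_C_mul]
  rcases n with _ | n
  · simp only [coeff_zero_X_mul, map_sub, coeff_rescale]
    simp
  · have : ((n + 1 : ℕ) : K) ≠ 0 := by exact_mod_cast n.succ_ne_zero
    simp only [coeff_succ_X_mul, coeff_egf, eulerPolyAtZero, neg_mul, bernoulliPowerSeries,
      map_div₀, eq_ratCast, map_natCast, map_sub, coeff_mk, factorial_succ, cast_mul, cast_add,
      cast_one, coeff_rescale]
    field_simp
    ring

theorem egf_eulerPolyAtZero_mul_exp_add_one :
    egf (eulerPolyAtZero (K := K)) * (exp K + 1) = 2 := by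
  have hB := bernoulliPowerSeries_mul_exp_sub_one K
  have hB₂ : rescale 2 (bernoulliPowerSeries K) * (exp K ^ 2 - 1) = 2 * X := by
    have := congrArg (rescale (2 : K)) hB
    rwa [map_mul, map_sub, map_one, rescale_X, map_ofNat, ← Nat.cast_ofNat,
      ← exp_pow_eq_rescale_exp] at this
  have hX : X * (exp K - 1) ≠ 0 :=
    mul_ne_zero X_ne_zero fun h => by simpa using congrArg (coeff 1) h
  refine mul_right_cancel₀ hX ?_
  linear_combination (exp K + 1) * (exp K - 1) * X_mul_egf_eulerPolyAtZero (K := K) +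
    2 * (exp K + 1) * hB - 2 * hB₂

end EulerPolynomialAtZero

theorem signTwist_taylorSeries_sec :
    signTwist (taylorSeries fun x => (Real.cos x)⁻¹) =
      egf fun n => (-1) ^ (n / 2) * eulerNumber n := by
  ext n
  simp [signTwist, taylorSeries, eulerNumber, mul_div_assoc]

theorem egf_signedEulerNumber_mul_exp_add_exp_neg :
    (egf fun n => (-1) ^ (n / 2) * eulerNumber n) * (exp ℝ + rescale (-1) (exp ℝ)) = 2 := by
  have hsec : ∀ n, Odd n → coeff n (taylorSeries fun x => (Real.cos x)⁻¹) = 0 :=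
    fun n hn => coeff_taylorSeries_of_odd (fun x => by simp) hn
  have hcos : ∀ n, Odd n → coeff n (cos ℝ) = 0 := fun n hn => by
    simp [PowerSeries.cos, Nat.not_even_iff_odd.mpr hn]
  rw [← signTwist_taylorSeries_sec, ← two_mul_signTwist_cos, mul_left_comm,
    ← signTwist_mul hsec hcos, taylorSeries_sec_mul_cos, signTwist_one, mul_one]

theorem egf_signedEulerNumber :
    (egf fun n => (-1) ^ (n / 2) * eulerNumber n) =
      rescale (-1) (exp ℝ) * rescale (-2) (egf eulerPolyAtZero) := by
  have hcosh : exp ℝ + rescale (-1) (exp ℝ) ≠ 0 := fun h => by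
    have := congrArg (coeff 0) h
    simp only [map_add, coeff_rescale, coeff_exp, map_zero] at this
    norm_num at this
  refine mul_right_cancel₀ hcosh ?_
  have hexp_neg : rescale (-1) (exp ℝ) * exp ℝ = 1 := by
    rw [mul_comm]; exact exp_mul_exp_neg_eq_one
  have hexp_sq : rescale (-1 : ℝ) (exp ℝ) ^ 2 = rescale (-2) (exp ℝ) := by
    rw [sq, exp_mul_exp_eq_exp_add]; norm_num
  have hG := congrArg (rescale (-2 : ℝ)) (egf_eulerPolyAtZero_mul_exp_add_one (K := ℝ))
  rw [map_mul, map_add, map_one, map_ofNat] at hG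
  rw [egf_signedEulerNumber_mul_exp_add_exp_neg]
  linear_combination -rescale (-2) (egf eulerPolyAtZero) * (hexp_neg + hexp_sq) - hG

theorem neg_one_pow_mul_sum_eulerNumber_eq_sum_eulerPolyAtZero (a q : ℝ) (n : ℕ) :
    (-1) ^ n * ∑ j ∈ range (n + 1),
        n.choose j * ((a / 2) ^ j * ((-1) ^ (j / 2) * eulerNumber j)) * (a / 2 - q) ^ (n - j)
      = ∑ j ∈ range (n + 1), n.choose j * (a ^ j * eulerPolyAtZero j) * q ^ (n - j) := by
  have hL : rescale a (egf eulerPolyAtZero) * rescale q (exp ℝ) =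
      egf fun n => ∑ j ∈ range (n + 1), n.choose j * (a ^ j * eulerPolyAtZero j) * q ^ (n - j) := by
    rw [rescale_egf, rescale_exp_eq_egf, egf_mul]
  have hR : rescale (a / 2) (egf fun n => (-1) ^ (n / 2) * eulerNumber n) *
        rescale (a / 2 - q) (exp ℝ) =
      egf fun n => ∑ j ∈ range (n + 1),
        n.choose j * ((a / 2) ^ j * ((-1) ^ (j / 2) * eulerNumber j)) * (a / 2 - q) ^ (n - j) := by
    rw [rescale_egf, rescale_exp_eq_egf, egf_mul]
  have key : rescale (-1) (rescale (a / 2) (egf fun n => (-1) ^ (n / 2) * eulerNumber n) *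
        rescale (a / 2 - q) (exp ℝ)) = rescale a (egf eulerPolyAtZero) * rescale q (exp ℝ) := by
    rw [egf_signedEulerNumber, map_mul, map_mul, map_mul, rescale_rescale, rescale_rescale,
      rescale_rescale, rescale_rescale, rescale_rescale, mul_right_comm, exp_mul_exp_eq_exp_add,
      mul_comm, show -2 * (a / 2 * -1) = a by ring,
      show -1 * (a / 2 * -1) + (a / 2 - q) * -1 = q by ring]
  rw [hL, hR, rescale_egf] at key
  exact congrFun (egf_injective key) n

theorem bernoulli_euler_two_parameter_general (k : ℕ) (a q : ℝ) :
    q ^ k / 2 - ∑ j ∈ Finset.Icc 1 k,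
        (k.choose j : ℝ) * q ^ (k - j) * a ^ j * ((2 ^ (j + 1) - 1) / (j + 1))
          * (bernoulli (j + 1) : ℝ)
      = ((-1 : ℝ) ^ k / 2) * ∑ j ∈ Finset.range (k + 1),
          (k.choose j : ℝ) * (a / 2 - q) ^ (k - j) * (a / 2) ^ j
            * (-1 : ℝ) ^ (j / 2) * eulerNumber j := by
  have hterm (j : ℕ) : (k.choose j : ℝ) * q ^ (k - j) * a ^ j * ((2 ^ (j + 1) - 1) / (j + 1))
        * (bernoulli (j + 1) : ℝ) =
      -(k.choose j * (a ^ j * eulerPolyAtZero j) * q ^ (k - j)) / 2 := by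
    rw [eulerPolyAtZero]
    field_simp
  have hzero : (k.choose 0 : ℝ) * (a ^ 0 * eulerPolyAtZero 0) * q ^ (k - 0) = q ^ k := by
    norm_num [eulerPolyAtZero, bernoulli_one]
  calc _ = (∑ j ∈ range (k + 1), k.choose j * (a ^ j * eulerPolyAtZero j) * q ^ (k - j)) / 2 := by
        rw [range_eq_Ico, sum_eq_sum_Ico_succ_bot (by omega : 0 < k + 1), hzero, zero_add,
          Ico_add_one_right_eq_Icc, sum_congr rfl fun j _ => hterm j, ← sum_div, sum_neg_distrib]
        ring
    _ = (-1) ^ k * (∑ j ∈ range (k + 1), k.choose j * ((a / 2) ^ j *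
          ((-1) ^ (j / 2) * eulerNumber j)) * (a / 2 - q) ^ (k - j)) / 2 := by
        rw [neg_one_pow_mul_sum_eulerNumber_eq_sum_eulerPolyAtZero]
    _ = _ := by
        rw [div_mul_eq_mul_div]
        congr 2
        exact sum_congr rfl fun j _ => by ring

theorem bernoulli_euler_two_parameter (k : ℕ) (hk : 1 ≤ k) (a q : ℝ) (ha : 0 < a) :
    q ^ k / 2 - ∑ j ∈ Finset.Icc 1 k,
        (k.choose j : ℝ) * q ^ (k - j) * a ^ j * ((2 ^ (j + 1) - 1) / (j + 1))
          * (bernoulli (j + 1) : ℝ)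
      = ((-1 : ℝ) ^ k / 2) * ∑ j ∈ Finset.range (k + 1),
          (k.choose j : ℝ) * (a / 2 - q) ^ (k - j) * (a / 2) ^ j
            * (-1 : ℝ) ^ (j / 2) * eulerNumber j :=
  bernoulli_euler_two_parameter_general k a q
end
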